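/- arXiv:0707.0698 — 4 statements merged into one kernel-verified Lean document; each statement's English description precedes it below -/
import Mathlib

section
/- For every element a of the ring 𝕂̃ of Colombeau generalized numbers there exists an idempotent e ∈ 𝕂̃ (i.e., e² = e) such that a + e is invertible in 𝕂̃. (In particular, 𝕂̃ is an exchange/clean ring.) -/
/-! Take for `e` the class of the indicator net of `{ε | ‖a_ε‖ < 1/2}`, for a representative
`(a_ε)` of `a`. Adding `1` exactly where `a_ε` is small makes `‖a_ε + e_ε‖ ≥ 1/2` for every `ε`,
so the pointwise inverse of `a + e` is bounded, hence moderate, and inverts `a + e`. -/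

noncomputable section

set_option maxHeartbeats 1000000
set_option synthInstance.maxHeartbeats 400000

open scoped Classical

/-- The index set `(0,1) ⊆ ℝ` of the nets. -/
abbrev Eps : Type := Set.Ioo (0:ℝ) 1

variable (K : Type) [RCLike K]

/-- A net `(x_ε)_{ε ∈ (0,1)}` is moderate if `|x_ε| ≤ ε^a` for some `a ∈ ℝ`,
for all sufficiently small `ε`. -/
def IsModerate (x : Eps → K) : Prop :=
  ∃ a : ℝ, ∃ ε₀ ∈ Set.Ioo (0:ℝ) 1, ∀ ε : Eps, (ε : ℝ) ≤ ε₀ → ‖x ε‖ ≤ (ε : ℝ) ^ a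

/-- A net `(x_ε)_{ε ∈ (0,1)}` is negligible if for every `a ∈ ℝ`, `|x_ε| ≤ ε^a`
for all sufficiently small `ε`. -/
def IsNegligible (x : Eps → K) : Prop :=
  ∀ a : ℝ, ∃ ε₀ ∈ Set.Ioo (0:ℝ) 1, ∀ ε : Eps, (ε : ℝ) ≤ ε₀ → ‖x ε‖ ≤ (ε : ℝ) ^ a

theorem rpow_two_bound {ε : ℝ} (h0 : 0 < ε) (h2 : ε ≤ 1/2) (a b : ℝ) :
    ε ^ a + ε ^ b ≤ ε ^ (min a b - 1) := by
  have h1 : ε ≤ 1 := h2.trans (by norm_num)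
  have ha : ε ^ a ≤ ε ^ min a b :=
    Real.rpow_le_rpow_of_exponent_ge h0 h1 (min_le_left a b)
  have hb : ε ^ b ≤ ε ^ min a b :=
    Real.rpow_le_rpow_of_exponent_ge h0 h1 (min_le_right a b)
  have key : 2 * ε ^ min a b ≤ ε ^ (min a b - 1) := by
    rw [Real.rpow_sub h0, Real.rpow_one, le_div_iff₀ h0]
    have hx : (0:ℝ) ≤ ε ^ min a b := (Real.rpow_pos_of_pos h0 _).le
    calc 2 * ε ^ min a b * ε ≤ 2 * ε ^ min a b * (1/2) := by
          apply mul_le_mul_of_nonneg_left h2 (by positivity)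
      _ = ε ^ min a b := by ring
  calc ε ^ a + ε ^ b ≤ 2 * ε ^ min a b := by linarith
    _ ≤ ε ^ (min a b - 1) := key

/-- The ring of moderate nets, as a subring of `K^{(0,1)}`. -/
def Moderate : Subring (Eps → K) where
  carrier := {x | IsModerate K x}
  zero_mem' := by
    refine ⟨0, 1/2, by constructor <;> norm_num, fun ε _ => ?_⟩
    simp [Real.rpow_zero]
  one_mem' := by
    refine ⟨0, 1/2, by constructor <;> norm_num, fun ε _ => ?_⟩
    simp [Real.rpow_zero]
  add_mem' := by
    rintro x y ⟨a, ε₀, h₀, ha⟩ ⟨b, ε₁, h₁, hb⟩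
    refine ⟨min a b - 1, min (min ε₀ ε₁) (1/2), ⟨lt_min (lt_min h₀.1 h₁.1) (by norm_num), ?_⟩,
      fun ε hε => ?_⟩
    · calc min (min ε₀ ε₁) (1/2) ≤ 1/2 := min_le_right _ _
        _ < 1 := by norm_num
    · have hε₀ : (ε:ℝ) ≤ ε₀ := le_trans hε (le_trans (min_le_left _ _) (min_le_left _ _))
      have hε₁ : (ε:ℝ) ≤ ε₁ := le_trans hε (le_trans (min_le_left _ _) (min_le_right _ _))
      have hε2 : (ε:ℝ) ≤ 1/2 := le_trans hε (min_le_right _ _)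
      calc ‖(x + y) ε‖ ≤ ‖x ε‖ + ‖y ε‖ := norm_add_le _ _
        _ ≤ (ε:ℝ) ^ a + (ε:ℝ) ^ b := add_le_add (ha ε hε₀) (hb ε hε₁)
        _ ≤ (ε:ℝ) ^ (min a b - 1) := rpow_two_bound ε.2.1 hε2 a b
  neg_mem' := by
    rintro x ⟨a, ε₀, h₀, ha⟩
    exact ⟨a, ε₀, h₀, fun ε hε => by simpa using ha ε hε⟩
  mul_mem' := by
    rintro x y ⟨a, ε₀, h₀, ha⟩ ⟨b, ε₁, h₁, hb⟩
    refine ⟨a + b, min ε₀ ε₁, ⟨lt_min h₀.1 h₁.1, lt_of_le_of_lt (min_le_left _ _) h₀.2⟩,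
      fun ε hε => ?_⟩
    have hε₀ : (ε:ℝ) ≤ ε₀ := le_trans hε (min_le_left _ _)
    have hε₁ : (ε:ℝ) ≤ ε₁ := le_trans hε (min_le_right _ _)
    calc ‖(x * y) ε‖ = ‖x ε‖ * ‖y ε‖ := norm_mul _ _
      _ ≤ (ε:ℝ) ^ a * (ε:ℝ) ^ b :=
        mul_le_mul (ha ε hε₀) (hb ε hε₁) (norm_nonneg _) (Real.rpow_pos_of_pos ε.2.1 _).le
      _ = (ε:ℝ) ^ (a + b) := (Real.rpow_add ε.2.1 _ _).symm

theorem mem_moderate {f : Eps → K} (h : IsModerate K f) : f ∈ Moderate K := h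

/-- The ideal of negligible nets in the ring of moderate nets. -/
def Negligible : Ideal (Moderate K) where
  carrier := {x | IsNegligible K (x : Eps → K)}
  zero_mem' := by
    intro a
    refine ⟨1/2, by constructor <;> norm_num, fun ε _ => ?_⟩
    have : (0:ℝ) ≤ (ε:ℝ) ^ a := (Real.rpow_pos_of_pos ε.2.1 _).le
    simpa using this
  add_mem' := by
    intro x y hx hy a
    obtain ⟨ε₀, h₀, ha⟩ := hx (a + 1)
    obtain ⟨ε₁, h₁, hb⟩ := hy (a + 1)
    refine ⟨min (min ε₀ ε₁) (1/2), ⟨lt_min (lt_min h₀.1 h₁.1) (by norm_num), ?_⟩, fun ε hε => ?_⟩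
    · calc min (min ε₀ ε₁) (1/2) ≤ 1/2 := min_le_right _ _
        _ < 1 := by norm_num
    · have hε₀ : (ε:ℝ) ≤ ε₀ := le_trans hε (le_trans (min_le_left _ _) (min_le_left _ _))
      have hε₁ : (ε:ℝ) ≤ ε₁ := le_trans hε (le_trans (min_le_left _ _) (min_le_right _ _))
      have hε2 : (ε:ℝ) ≤ 1/2 := le_trans hε (min_le_right _ _)
      have hbd := rpow_two_bound (ε := (ε:ℝ)) ε.2.1 hε2 (a+1) (a+1)
      simp only [min_self, add_sub_cancel_right] at hbd
      calc ‖((x + y : Moderate K) : Eps → K) ε‖ ≤ ‖(x : Eps → K) ε‖ + ‖(y : Eps → K) ε‖ := by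
            push_cast
            exact norm_add_le _ _
        _ ≤ (ε:ℝ) ^ (a+1) + (ε:ℝ) ^ (a+1) := add_le_add (ha ε hε₀) (hb ε hε₁)
        _ ≤ (ε:ℝ) ^ a := hbd
  smul_mem' := by
    intro c x hx
    show IsNegligible K ((c * x : Moderate K) : Eps → K)
    intro a
    obtain ⟨b, ε₀, h₀, hc⟩ := c.property
    obtain ⟨ε₁, h₁, hxa⟩ := hx (a - b)
    refine ⟨min ε₀ ε₁, ⟨lt_min h₀.1 h₁.1, lt_of_le_of_lt (min_le_left _ _) h₀.2⟩,
      fun ε hε => ?_⟩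
    have hε₀ : (ε:ℝ) ≤ ε₀ := le_trans hε (min_le_left _ _)
    have hε₁ : (ε:ℝ) ≤ ε₁ := le_trans hε (min_le_right _ _)
    calc ‖((c * x : Moderate K) : Eps → K) ε‖ = ‖(c : Eps → K) ε‖ * ‖(x : Eps → K) ε‖ := by
          push_cast
          exact norm_mul _ _
      _ ≤ (ε:ℝ) ^ b * (ε:ℝ) ^ (a - b) :=
        mul_le_mul (hc ε hε₀) (hxa ε hε₁) (norm_nonneg _) (Real.rpow_pos_of_pos ε.2.1 _).le
      _ = (ε:ℝ) ^ a := by rw [← Real.rpow_add ε.2.1]; ring_nf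

/-- The ring of Colombeau generalized numbers: the quotient of the ring of
moderate nets by the ideal of negligible nets. -/
abbrev CGen : Type := Moderate K ⧸ Negligible K

/-- The quotient map. -/
abbrev cmk : Moderate K →+* CGen K := Ideal.Quotient.mk (Negligible K)

/-- A canonical representative of a Colombeau generalized number. -/
def rep (x : CGen K) : Moderate K := (Ideal.Quotient.mk_surjective x).choose

theorem rep_spec (x : CGen K) : cmk K (rep K x) = x :=
  (Ideal.Quotient.mk_surjective x).choose_spec

theorem indicator_moderate (S : Set Eps) :
    IsModerate K (fun ε => if ε ∈ S then (1:K) else 0) := by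
  refine ⟨0, 1/2, by constructor <;> norm_num, fun ε _ => ?_⟩
  rw [Real.rpow_zero]
  by_cases h : ε ∈ S <;> simp [h]

/-- `e_S`: the generalized number given by the characteristic function of `S ⊆ (0,1)`. -/
def eS (S : Set Eps) : CGen K :=
  cmk K ⟨fun ε => if ε ∈ S then (1:K) else 0, mem_moderate K (indicator_moderate K S)⟩

theorem absNet_moderate (f : Moderate K) :
    IsModerate K (fun ε => ((‖(f : Eps → K) ε‖ : ℝ) : K)) := by
  obtain ⟨a, ε₀, h₀, h⟩ := f.property
  refine ⟨a, ε₀, h₀, fun ε hε => ?_⟩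
  simpa [RCLike.norm_ofReal, abs_norm] using h ε hε

/-- `|x|`: the class of the net `(|x_ε|)_ε` (for any representative of `x`). -/
def absC (x : CGen K) : CGen K :=
  cmk K ⟨_, mem_moderate K (absNet_moderate K (rep K x))⟩

theorem minNet_moderate (f g : Moderate K) :
    IsModerate K (fun ε => ((min ‖(f : Eps → K) ε‖ ‖(g : Eps → K) ε‖ : ℝ) : K)) := by
  obtain ⟨a, ε₀, h₀, h⟩ := f.property
  refine ⟨a, ε₀, h₀, fun ε hε => ?_⟩
  rw [RCLike.norm_ofReal, abs_of_nonneg (le_min (norm_nonneg _) (norm_nonneg _))]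
  exact le_trans (min_le_left _ _) (h ε hε)

/-- `|x| ∧ |y|`: the class of the pointwise minimum of `(|x_ε|)_ε` and `(|y_ε|)_ε`. -/
def infAbs (x y : CGen K) : CGen K :=
  cmk K ⟨_, mem_moderate K (minNet_moderate K (rep K x) (rep K y))⟩

theorem sqrtNet_moderate (f : Moderate K) :
    IsModerate K (fun ε => ((Real.sqrt ‖(f : Eps → K) ε‖ : ℝ) : K)) := by
  obtain ⟨a, ε₀, h₀, h⟩ := f.property
  refine ⟨a / 2, ε₀, h₀, fun ε hε => ?_⟩
  rw [RCLike.norm_ofReal, abs_of_nonneg (Real.sqrt_nonneg _)]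
  calc Real.sqrt ‖(f : Eps → K) ε‖ ≤ Real.sqrt ((ε:ℝ) ^ a) := Real.sqrt_le_sqrt (h ε hε)
    _ = (ε:ℝ) ^ (a / 2) := by
        rw [Real.sqrt_eq_rpow, ← Real.rpow_mul ε.2.1.le]
        ring_nf

/-- `√|x|`: the class of the net `(√|x_ε|)_ε` (for any representative of `x`). -/
def sqrtAbs (x : CGen K) : CGen K :=
  cmk K ⟨_, mem_moderate K (sqrtNet_moderate K (rep K x))⟩

/-- The annihilator `Ann(a) = {x : x·a = 0}` as an ideal. -/
def annIdeal (a : CGen K) : Ideal (CGen K) where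
  carrier := {x | x * a = 0}
  zero_mem' := by simp
  add_mem' := by
    intro x y hx hy
    show (x + y) * a = 0
    rw [add_mul, hx, hy, add_zero]
  smul_mem' := by
    intro c x hx
    show c * x * a = 0
    rw [mul_assoc, hx, mul_zero]

/-- The order relation on `𝕂̃`: `x ≤ y` iff there exist (real-valued) representatives
`(u_ε)_ε` of `x` and `(v_ε)_ε` of `y` with `u_ε ≤ v_ε` for all `ε`. -/
def leC (x y : CGen K) : Prop :=
  ∃ u v : Moderate K, cmk K u = x ∧ cmk K v = y ∧
    ∀ ε : Eps, ∃ r s : ℝ, (u : Eps → K) ε = (r : K) ∧ (v : Eps → K) ε = (s : K) ∧ r ≤ s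

/-- A z-ideal: if `b ∈ I` and `a` belongs to exactly the same maximal ideals as `b`,
then `a ∈ I`. -/
def IsZIdeal (I : Ideal (CGen K)) : Prop :=
  ∀ a b : CGen K, b ∈ I →
    (∀ M : Ideal (CGen K), M.IsMaximal → (a ∈ M ↔ b ∈ M)) → a ∈ I

theorem isModerate_of_norm_le {x : Eps → K} (C : ℝ) (h : ∀ ε, ‖x ε‖ ≤ C) : IsModerate K x := by
  refine ⟨-1, min (1 / 2) (|C| + 1)⁻¹,
    ⟨by positivity, (min_le_left _ _).trans_lt (by norm_num)⟩, fun ε hε => ?_⟩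
  have hε : (ε : ℝ) ≤ (|C| + 1)⁻¹ := hε.trans (min_le_right _ _)
  calc ‖x ε‖ ≤ C := h ε
    _ ≤ |C| + 1 := (le_abs_self C).trans (by linarith)
    _ ≤ (ε : ℝ)⁻¹ := by rwa [le_inv_comm₀ (by positivity) ε.2.1]
    _ = (ε : ℝ) ^ (-1 : ℝ) := (Real.rpow_neg_one _).symm

theorem isUnit_cmk_of_le_norm (x : Moderate K) {c : ℝ} (hc : 0 < c)
    (h : ∀ ε, c ≤ ‖(x : Eps → K) ε‖) : IsUnit (cmk K x) := by
  have hx : ∀ ε, (x : Eps → K) ε ≠ 0 := fun ε h0 => by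
    have := h ε
    rw [h0, norm_zero] at this
    linarith
  have hinv : IsModerate K (fun ε => ((x : Eps → K) ε)⁻¹) :=
    isModerate_of_norm_le K c⁻¹ fun ε => by
      rw [norm_inv]
      exact inv_anti₀ hc (h ε)
  refine IsUnit.of_mul_eq_one (cmk K ⟨_, hinv⟩) ?_
  rw [← map_mul, ← map_one (cmk K)]
  congr 1
  ext ε
  exact mul_inv_cancel₀ (hx ε)

theorem eS_mul_self (S : Set Eps) : eS K S * eS K S = eS K S := by
  rw [eS, ← map_mul]
  congr 1
  ext ε
  show (if ε ∈ S then (1 : K) else 0) * (if ε ∈ S then 1 else 0) = if ε ∈ S then 1 else 0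
  split_ifs <;> simp

theorem half_le_norm_add_ite {R : Type*} [SeminormedRing R] [NormOneClass R] (z : R) :
    1 / 2 ≤ ‖z + if ‖z‖ < 1 / 2 then 1 else 0‖ := by
  split_ifs with hz
  · have := norm_sub_norm_le (1 : R) (-z)
    rw [norm_one, norm_neg, sub_neg_eq_add, add_comm] at this
    linarith
  · simpa using hz

/-- For every `a ∈ 𝕂̃` there is an idempotent `e` with `a + e` invertible
(`𝕂̃` is an exchange/clean ring). -/
theorem stmt0 (a : CGen K) : ∃ e : CGen K, e * e = e ∧ IsUnit (a + e) := by
  set S : Set Eps := {ε | ‖(rep K a : Eps → K) ε‖ < 1 / 2}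
  refine ⟨eS K S, eS_mul_self K S, ?_⟩
  have hsum : a + eS K S = cmk K (rep K a + ⟨_, indicator_moderate K S⟩) := by
    rw [map_add, rep_spec]
    rfl
  rw [hsum]
  exact isUnit_cmk_of_le_norm K _ (by norm_num) fun ε => half_le_norm_add_ite _

end
end

section
/- For all a, b ∈ 𝕂̃: (1) a𝕂̃ + b𝕂̃ = (|a| + |b|)𝕂̃, so every finitely generated ideal of 𝕂̃ is principal (𝕂̃ is a Bézout ring); (2) a𝕂̃ ∩ b𝕂̃ = (|a| ∧ |b|)𝕂̃. -/
noncomputable section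

set_option maxHeartbeats 1000000
set_option synthInstance.maxHeartbeats 400000

open scoped Classical

variable (K : Type) [RCLike K]

theorem isModerate_of_le {p f g : Eps → K} (hf : IsModerate K f) (hg : IsModerate K g)
    (h : ∀ ε, ‖p ε‖ ≤ ‖f ε‖ + ‖g ε‖) : IsModerate K p := by
  obtain ⟨a, ε₀, h₀, ha⟩ := hf
  obtain ⟨b, ε₁, h₁, hb⟩ := hg
  refine ⟨min a b - 1, min (min ε₀ ε₁) (1/2), ⟨lt_min (lt_min h₀.1 h₁.1) (by norm_num),
    lt_of_le_of_lt (min_le_right _ _) (by norm_num)⟩, fun ε hε => ?_⟩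
  have hε₀ : (ε:ℝ) ≤ ε₀ := le_trans hε (le_trans (min_le_left _ _) (min_le_left _ _))
  have hε₁ : (ε:ℝ) ≤ ε₁ := le_trans hε (le_trans (min_le_left _ _) (min_le_right _ _))
  have hε2 : (ε:ℝ) ≤ 1/2 := le_trans hε (min_le_right _ _)
  calc ‖p ε‖ ≤ ‖f ε‖ + ‖g ε‖ := h ε
    _ ≤ (ε:ℝ)^a + (ε:ℝ)^b := add_le_add (ha ε hε₀) (hb ε hε₁)
    _ ≤ _ := rpow_two_bound ε.2.1 hε2 a b

theorem isModerate_of_norm_le_one {p : Eps → K} (h : ∀ ε, ‖p ε‖ ≤ 1) : IsModerate K p := by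
  refine ⟨0, 1/2, by constructor <;> norm_num, fun ε _ => ?_⟩
  rw [Real.rpow_zero]
  exact h ε

theorem isNegligible_of_le {p n : Eps → K} (hn : IsNegligible K n)
    (h : ∀ ε, ‖p ε‖ ≤ ‖n ε‖) : IsNegligible K p := by
  intro a
  obtain ⟨ε₀, h₀, ha⟩ := hn a
  exact ⟨ε₀, h₀, fun ε hε => le_trans (h ε) (ha ε hε)⟩

theorem mem_span_single {f g : Moderate K} {w : Eps → K} (hw : IsModerate K w)
    (h : ∀ ε, (f : Eps → K) ε = w ε * (g : Eps → K) ε) :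
    cmk K f ∈ Ideal.span {cmk K g} := by
  rw [Ideal.mem_span_singleton']
  refine ⟨cmk K ⟨w, hw⟩, ?_⟩
  rw [← map_mul]
  congr 1
  ext ε
  exact (h ε).symm

theorem cmk_eq_of_neg {f g : Moderate K}
    (h : IsNegligible K (fun ε => (f : Eps → K) ε - (g : Eps → K) ε)) :
    cmk K f = cmk K g := by
  rw [Ideal.Quotient.eq]
  show IsNegligible K ((f - g : Moderate K) : Eps → K)
  convert h using 1
  rfl

theorem part1 (a b : CGen K) :
    Ideal.span {a} + Ideal.span {b} = Ideal.span {absC K a + absC K b} := by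
  set f := rep K a with hf
  set g := rep K b with hg
  set A : Moderate K := ⟨_, mem_moderate K (absNet_moderate K f)⟩ with hA
  set B : Moderate K := ⟨_, mem_moderate K (absNet_moderate K g)⟩ with hB
  have habs : absC K a + absC K b = cmk K (A + B) := by rw [map_add]; rfl
  have hfa : cmk K f = a := rep_spec K a
  have hgb : cmk K g = b := rep_spec K b
  -- a ∈ span {|a|+|b|}
  have hmem_a : a ∈ Ideal.span {absC K a + absC K b} := by
    rw [habs, ← hfa]
    refine mem_span_single K (w := fun ε =>
      if (‖(f : Eps → K) ε‖ + ‖(g : Eps → K) ε‖ : ℝ) = 0 then 0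
      else (f : Eps → K) ε / ((‖(f : Eps → K) ε‖ + ‖(g : Eps → K) ε‖ : ℝ) : K))
      (isModerate_of_norm_le_one K fun ε => ?_) (fun ε => ?_)
    · by_cases hc : (‖(f : Eps → K) ε‖ + ‖(g : Eps → K) ε‖ : ℝ) = 0
      · simp [hc]
      · have hpos : 0 < (‖(f : Eps → K) ε‖ + ‖(g : Eps → K) ε‖ : ℝ) :=
          lt_of_le_of_ne (by positivity) (Ne.symm hc)
        simp only [hc, if_false, norm_div, RCLike.norm_ofReal,
          abs_of_pos hpos]
        rw [div_le_one hpos]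
        linarith [norm_nonneg ((g : Eps → K) ε)]
    · have hAB : ((A + B : Moderate K) : Eps → K) ε
          = ((‖(f : Eps → K) ε‖ + ‖(g : Eps → K) ε‖ : ℝ) : K) := by
        push_cast [hA, hB]
        rfl
      rw [hAB]
      by_cases hc : (‖(f : Eps → K) ε‖ + ‖(g : Eps → K) ε‖ : ℝ) = 0
      · have : ‖(f : Eps → K) ε‖ = 0 := by
          have := norm_nonneg ((f : Eps → K) ε)
          have := norm_nonneg ((g : Eps → K) ε)
          linarith
        simp [hc, norm_eq_zero.mp this]
      · simp only [hc, if_false]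
        rw [div_mul_cancel₀]
        exact fun h0 => hc (by exact_mod_cast h0)
  have hmem_b : b ∈ Ideal.span {absC K a + absC K b} := by
    rw [habs, ← hgb]
    refine mem_span_single K (w := fun ε =>
      if (‖(f : Eps → K) ε‖ + ‖(g : Eps → K) ε‖ : ℝ) = 0 then 0
      else (g : Eps → K) ε / ((‖(f : Eps → K) ε‖ + ‖(g : Eps → K) ε‖ : ℝ) : K))
      (isModerate_of_norm_le_one K fun ε => ?_) (fun ε => ?_)
    · by_cases hc : (‖(f : Eps → K) ε‖ + ‖(g : Eps → K) ε‖ : ℝ) = 0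
      · simp [hc]
      · have hpos : 0 < (‖(f : Eps → K) ε‖ + ‖(g : Eps → K) ε‖ : ℝ) :=
          lt_of_le_of_ne (by positivity) (Ne.symm hc)
        simp only [hc, if_false, norm_div, RCLike.norm_ofReal,
          abs_of_pos hpos]
        rw [div_le_one hpos]
        linarith [norm_nonneg ((f : Eps → K) ε)]
    · have hAB : ((A + B : Moderate K) : Eps → K) ε
          = ((‖(f : Eps → K) ε‖ + ‖(g : Eps → K) ε‖ : ℝ) : K) := by
        push_cast [hA, hB]
        rfl
      rw [hAB]
      by_cases hc : (‖(f : Eps → K) ε‖ + ‖(g : Eps → K) ε‖ : ℝ) = 0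
      · have : ‖(g : Eps → K) ε‖ = 0 := by
          have := norm_nonneg ((f : Eps → K) ε)
          have := norm_nonneg ((g : Eps → K) ε)
          linarith
        simp [hc, norm_eq_zero.mp this]
      · simp only [hc, if_false]
        rw [div_mul_cancel₀]
        exact fun h0 => hc (by exact_mod_cast h0)
  -- |a| ∈ span {a} and |b| ∈ span {b}
  have habsa : absC K a ∈ Ideal.span {a} := by
    show cmk K A ∈ Ideal.span {a}
    rw [← hfa]
    refine mem_span_single K (w := fun ε =>
      if (f : Eps → K) ε = 0 then 0 else ((‖(f : Eps → K) ε‖ : ℝ) : K) / (f : Eps → K) ε)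
      (isModerate_of_norm_le_one K fun ε => ?_) (fun ε => ?_)
    · by_cases hc : (f : Eps → K) ε = 0
      · simp [hc]
      · simp [hc, norm_div, RCLike.norm_ofReal, abs_norm,
          div_self (norm_ne_zero_iff.mpr hc)]
    · by_cases hc : (f : Eps → K) ε = 0
      · simp [hA, hc]
      · show ((‖(f : Eps → K) ε‖ : ℝ) : K) = _
        simp only [hc, if_false]
        rw [div_mul_cancel₀ _ hc]
  have habsb : absC K b ∈ Ideal.span {b} := by
    show cmk K B ∈ Ideal.span {b}
    rw [← hgb]
    refine mem_span_single K (w := fun ε =>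
      if (g : Eps → K) ε = 0 then 0 else ((‖(g : Eps → K) ε‖ : ℝ) : K) / (g : Eps → K) ε)
      (isModerate_of_norm_le_one K fun ε => ?_) (fun ε => ?_)
    · by_cases hc : (g : Eps → K) ε = 0
      · simp [hc]
      · simp [hc, norm_div, RCLike.norm_ofReal, abs_norm,
          div_self (norm_ne_zero_iff.mpr hc)]
    · by_cases hc : (g : Eps → K) ε = 0
      · simp [hB, hc]
      · show ((‖(g : Eps → K) ε‖ : ℝ) : K) = _
        simp only [hc, if_false]
        rw [div_mul_cancel₀ _ hc]
  rw [Submodule.add_eq_sup]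
  apply le_antisymm
  · exact sup_le ((Ideal.span_singleton_le_iff_mem _).mpr hmem_a)
      ((Ideal.span_singleton_le_iff_mem _).mpr hmem_b)
  · exact (Ideal.span_singleton_le_iff_mem _).mpr (Submodule.add_mem_sup habsa habsb)

theorem part2 (a b : CGen K) :
    Ideal.span {a} ⊓ Ideal.span {b} = Ideal.span {infAbs K a b} := by
  set f := rep K a with hf
  set g := rep K b with hg
  set M : Moderate K := ⟨_, mem_moderate K (minNet_moderate K f g)⟩ with hM
  have hfa : cmk K f = a := rep_spec K a
  have hgb : cmk K g = b := rep_spec K b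
  have hinf : infAbs K a b = cmk K M := rfl
  apply le_antisymm
  · intro x hx
    obtain ⟨hx1, hx2⟩ := Submodule.mem_inf.mp hx
    rw [← hfa, Ideal.mem_span_singleton'] at hx1
    obtain ⟨y, hy⟩ := hx1
    rw [← hgb, Ideal.mem_span_singleton'] at hx2
    obtain ⟨z, hz⟩ := hx2
    set u := rep K y with hu
    set v := rep K z with hv
    have huf : cmk K (u * f) = x := by rw [map_mul, rep_spec]; exact hy
    have hvg : cmk K (v * g) = x := by rw [map_mul, rep_spec]; exact hz
    have hneg : IsNegligible K ((u * f - v * g : Moderate K) : Eps → K) :=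
      Ideal.Quotient.eq.mp (huf.trans hvg.symm)
    set w : Eps → K := fun ε =>
      if ‖(f : Eps → K) ε‖ ≤ ‖(g : Eps → K) ε‖ then
        (if (f : Eps → K) ε = 0 then 0
         else (u : Eps → K) ε * (f : Eps → K) ε / ((‖(f : Eps → K) ε‖ : ℝ) : K))
      else
        (if (g : Eps → K) ε = 0 then 0
         else (v : Eps → K) ε * (g : Eps → K) ε / ((‖(g : Eps → K) ε‖ : ℝ) : K)) with hw
    have hwmod : IsModerate K w := by
      apply isModerate_of_le K u.property v.property
      intro ε
      rw [hw]
      dsimp only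
      split_ifs with h1 h2 h3
      · rw [norm_zero]; positivity
      · rw [norm_div, norm_mul, RCLike.norm_ofReal, abs_norm,
          mul_div_assoc, div_self (norm_ne_zero_iff.mpr h2), mul_one]
        exact le_add_of_nonneg_right (norm_nonneg _)
      · rw [norm_zero]; positivity
      · rw [norm_div, norm_mul, RCLike.norm_ofReal, abs_norm,
          mul_div_assoc, div_self (norm_ne_zero_iff.mpr h3), mul_one]
        exact le_add_of_nonneg_left (norm_nonneg _)
    have hkey : cmk K (u * f) = cmk K ⟨w, hwmod⟩ * cmk K M := by
      rw [← map_mul]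
      apply cmk_eq_of_neg
      apply isNegligible_of_le K hneg
      intro ε
      show ‖(u : Eps → K) ε * (f : Eps → K) ε -
        w ε * ((min ‖(f : Eps → K) ε‖ ‖(g : Eps → K) ε‖ : ℝ) : K)‖ ≤
        ‖(u : Eps → K) ε * (f : Eps → K) ε - (v : Eps → K) ε * (g : Eps → K) ε‖
      rw [hw]
      dsimp only
      split_ifs with h1 h2 h3
      · simp only [h2, mul_zero, zero_mul, zero_sub, sub_zero, norm_neg, norm_zero]
        positivity
      · rw [min_eq_left h1, div_mul_cancel₀ _
          (RCLike.ofReal_ne_zero.mpr (norm_ne_zero_iff.mpr h2)), sub_self, norm_zero]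
        exact norm_nonneg _
      · rw [min_eq_right (not_le.mp h1).le, h3]
        simp
      · rw [min_eq_right (not_le.mp h1).le, div_mul_cancel₀ _
          (RCLike.ofReal_ne_zero.mpr (norm_ne_zero_iff.mpr h3))]
    rw [hinf, Ideal.mem_span_singleton', ← huf, hkey]
    exact ⟨cmk K ⟨w, hwmod⟩, rfl⟩
  · refine le_inf ((Ideal.span_singleton_le_iff_mem _).mpr ?_)
      ((Ideal.span_singleton_le_iff_mem _).mpr ?_)
    · rw [hinf, ← hfa]
      refine mem_span_single K (w := fun ε =>
        if (f : Eps → K) ε = 0 then 0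
        else ((min ‖(f : Eps → K) ε‖ ‖(g : Eps → K) ε‖ : ℝ) : K) / (f : Eps → K) ε)
        (isModerate_of_norm_le_one K fun ε => ?_) (fun ε => ?_)
      · by_cases hc : (f : Eps → K) ε = 0
        · simp [hc]
        · have hfpos : 0 < ‖(f : Eps → K) ε‖ := norm_pos_iff.mpr hc
          simp only [hc, if_false, norm_div, RCLike.norm_ofReal,
            abs_of_nonneg (le_min (norm_nonneg _) (norm_nonneg _))]
          rw [div_le_one hfpos]
          exact min_le_left _ _
      · show ((min ‖(f : Eps → K) ε‖ ‖(g : Eps → K) ε‖ : ℝ) : K) = _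
        by_cases hc : (f : Eps → K) ε = 0
        · simp [hc, min_eq_left (norm_nonneg _)]
        · simp only [hc, if_false]
          rw [div_mul_cancel₀ _ hc]
    · rw [hinf, ← hgb]
      refine mem_span_single K (w := fun ε =>
        if (g : Eps → K) ε = 0 then 0
        else ((min ‖(f : Eps → K) ε‖ ‖(g : Eps → K) ε‖ : ℝ) : K) / (g : Eps → K) ε)
        (isModerate_of_norm_le_one K fun ε => ?_) (fun ε => ?_)
      · by_cases hc : (g : Eps → K) ε = 0
        · simp [hc]
        · have hgpos : 0 < ‖(g : Eps → K) ε‖ := norm_pos_iff.mpr hc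
          simp only [hc, if_false, norm_div, RCLike.norm_ofReal,
            abs_of_nonneg (le_min (norm_nonneg _) (norm_nonneg _))]
          rw [div_le_one hgpos]
          exact min_le_right _ _
      · show ((min ‖(f : Eps → K) ε‖ ‖(g : Eps → K) ε‖ : ℝ) : K) = _
        by_cases hc : (g : Eps → K) ε = 0
        · simp [hc, min_eq_right (norm_nonneg _)]
        · simp only [hc, if_false]
          rw [div_mul_cancel₀ _ hc]

/-- `a𝕂̃ + b𝕂̃ = (|a| + |b|)𝕂̃` (so `𝕂̃` is a Bézout ring: every
finitely generated ideal is principal), and `a𝕂̃ ∩ b𝕂̃ = (|a| ∧ |b|)𝕂̃`. -/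
theorem stmt2 (a b : CGen K) :
    (Ideal.span {a} + Ideal.span {b} = Ideal.span {absC K a + absC K b}) ∧
    (Ideal.span {a} ⊓ Ideal.span {b} = Ideal.span {infAbs K a b}) ∧
    (∀ I : Ideal (CGen K), I.FG → ∃ c : CGen K, I = Ideal.span {c}) := by
  refine ⟨part1 K a b, part2 K a b, ?_⟩
  intro I hI
  obtain ⟨s, hs⟩ := hI
  suffices h : ∀ t : Finset (CGen K), ∃ c, Ideal.span (↑t : Set (CGen K)) = Ideal.span {c} by
    obtain ⟨c, hc⟩ := h s
    exact ⟨c, by rw [← hs, hc]⟩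
  intro t
  induction t using Finset.induction_on with
  | empty => exact ⟨0, by rw [Finset.coe_empty, Ideal.span_empty, eq_comm, Ideal.span_singleton_eq_bot]⟩
  | @insert x t hxt ih =>
    obtain ⟨c, hc⟩ := ih
    refine ⟨absC K x + absC K c, ?_⟩
    rw [Finset.coe_insert, Ideal.span_insert, hc, ← Submodule.add_eq_sup, part1]


end
end

section
/- For a proper ideal I of 𝕂̃ the following are equivalent: (1) I is pseudoprime; (2) the set of ideals of 𝕂̃ containing I is totally ordered by inclusion; (3) I is irreducible, i.e., for all ideals J, K of 𝕂̃, I = J ∩ K implies I = J or I = K; (4) for every S ⊆ (0,1), e_S ∈ I or e_{∁S} ∈ I; (5) the radical of I is a prime ideal. -/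
/-!
Write `x = [u]`, `y = [v]` and split `(0,1)` into `S = {ε | |u_ε| ≤ |v_ε|}` and `∁S`. Dividing
nets on each half shows `y ∣ x e_S` and `x ∣ y e_{∁S}`. As `𝕂̃` is reduced, `xy ∈ J` for a
radical ideal `J` then forces `x e_S, y e_{∁S} ∈ J`. Condition (4) decides which of the two
halves `I` absorbs, and `x = x e_S + x e_{∁S}` gives (1), (2) and (5). Conversely (1), (3) and (5)
each yield (4) from `e_S e_{∁S} = 0` and `e_S + e_{∁S} = 1`.
-/

noncomputable section

set_option maxHeartbeats 1000000
set_option synthInstance.maxHeartbeats 400000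

open scoped Classical

variable (K : Type) [RCLike K]

section CommRing

variable {R : Type*} [CommRing R] {I J : Ideal R} {e f x y : R}

theorem Ideal.mem_of_mul_mem_of_mul_mem (hef : e + f = 1) (he : x * e ∈ I) (hf : x * f ∈ I) :
    x ∈ I := by
  simpa only [← mul_add, hef, mul_one] using I.add_mem he hf

theorem Ideal.mul_mem_of_mem_span_singleton_sup (hef : e * f = 0) {z : R}
    (hz : z ∈ Ideal.span {e} ⊔ I) : z * f ∈ I := by
  obtain ⟨a, i, hi, rfl⟩ := Ideal.mem_span_singleton_sup.1 hz
  rw [add_mul, mul_assoc, hef, mul_zero, zero_add]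
  exact I.mul_mem_right f hi

theorem Ideal.span_singleton_sup_inf_span_singleton_sup (hef : e + f = 1) (hef0 : e * f = 0) :
    (Ideal.span {e} ⊔ I) ⊓ (Ideal.span {f} ⊔ I) = I := by
  refine le_antisymm (fun z hz => ?_) (le_inf le_sup_right le_sup_right)
  have hfe0 : f * e = 0 := by rwa [mul_comm]
  exact I.mem_of_mul_mem_of_mul_mem hef (Ideal.mul_mem_of_mem_span_singleton_sup hfe0 hz.2)
    (Ideal.mul_mem_of_mem_span_singleton_sup hef0 hz.1)

theorem Ideal.IsRadical.mul_mem_of_dvd (hJ : J.IsRadical) (hdvd : y ∣ x * e) (hxy : x * y ∈ J) :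
    x * e ∈ J := by
  obtain ⟨c, hc⟩ := hdvd
  have hsq : (x * e) ^ 2 = x * y * (e * c) := by
    rw [sq]
    nth_rw 2 [hc]
    ring
  exact hJ ⟨2, hsq ▸ J.mul_mem_right _ hxy⟩

theorem IsIdempotentElem.mem_of_mem_radical (he : IsIdempotentElem e) (h : e ∈ I.radical) :
    e ∈ I := by
  obtain ⟨n, hn⟩ := h
  cases n with
  | zero =>
    rw [pow_zero] at hn
    simpa using I.mul_mem_left e hn
  | succ n => rwa [he.pow_succ_eq] at hn

end CommRing

def indicatorNet (S : Set Eps) : Moderate K :=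
  ⟨fun ε => if ε ∈ S then (1:K) else 0, mem_moderate K (indicator_moderate K S)⟩

theorem eS_eq_cmk (S : Set Eps) : eS K S = cmk K (indicatorNet K S) := rfl

theorem eS_mul (S T : Set Eps) : eS K S * eS K T = eS K (S ∩ T) := by
  rw [eS_eq_cmk, eS_eq_cmk, eS_eq_cmk, ← map_mul]
  congr 1
  ext ε
  by_cases hS : ε ∈ S <;> by_cases hT : ε ∈ T <;> simp [indicatorNet, hS, hT]

theorem eS_empty : eS K ∅ = 0 := by
  rw [eS_eq_cmk, ← map_zero (cmk K)]
  congr 1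
  ext ε
  simp [indicatorNet]

theorem eS_add_compl (S : Set Eps) : eS K S + eS K Sᶜ = 1 := by
  rw [eS_eq_cmk, eS_eq_cmk, ← map_add, ← map_one (cmk K)]
  congr 1
  ext ε
  by_cases hS : ε ∈ S <;> simp [indicatorNet, hS]

theorem eS_mul_compl (S : Set Eps) : eS K S * eS K Sᶜ = 0 := by
  rw [eS_mul, Set.inter_compl_self, eS_empty]

theorem isIdempotentElem_eS (S : Set Eps) : IsIdempotentElem (eS K S) := by
  rw [IsIdempotentElem, eS_mul, Set.inter_self]

theorem IsNegligible.of_mul_self {u : Eps → K} (h : IsNegligible K (u * u)) :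
    IsNegligible K u := by
  intro a
  obtain ⟨ε₀, hε₀, hu⟩ := h (a * 2)
  refine ⟨ε₀, hε₀, fun ε hε => ?_⟩
  have hsq : ‖u ε‖ ^ 2 ≤ ((ε : ℝ) ^ a) ^ 2 := by
    calc ‖u ε‖ ^ 2 = ‖(u * u) ε‖ := by rw [Pi.mul_apply, norm_mul, sq]
      _ ≤ (ε : ℝ) ^ (a * 2) := hu ε hε
      _ = ((ε : ℝ) ^ a) ^ 2 := by rw [Real.rpow_mul ε.2.1.le, Real.rpow_two]
  exact (pow_le_pow_iff_left₀ (norm_nonneg _) (Real.rpow_nonneg ε.2.1.le a) two_ne_zero).1 hsq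

instance : IsReduced (CGen K) := by
  refine (isReduced_iff_pow_one_lt 2 one_lt_two).2 fun x hx => ?_
  obtain ⟨u, rfl⟩ := Ideal.Quotient.mk_surjective x
  rw [← map_pow, Ideal.Quotient.eq_zero_iff_mem, sq] at hx
  exact Ideal.Quotient.eq_zero_iff_mem.2 (IsNegligible.of_mul_self K hx)

/-- The witness is the net `u / v` on `S` (zero elsewhere): it is bounded by `1`, and where
`v_ε = 0` also `u_ε = 0`. -/
theorem dvd_cmk_mul_eS (u v : Moderate K) (S : Set Eps)
    (hS : ∀ ε ∈ S, ‖(u : Eps → K) ε‖ ≤ ‖(v : Eps → K) ε‖) :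
    cmk K v ∣ cmk K u * eS K S := by
  let q : Eps → K := fun ε => if ε ∈ S then (u : Eps → K) ε / (v : Eps → K) ε else 0
  have hq : IsModerate K q := by
    refine ⟨0, 1/2, by norm_num, fun ε _ => ?_⟩
    rw [Real.rpow_zero]
    by_cases h : ε ∈ S
    · simp only [q, h, if_true, norm_div]
      exact div_le_one_of_le₀ (hS ε h) (norm_nonneg _)
    · simp [q, h]
  refine ⟨cmk K ⟨q, hq⟩, ?_⟩
  rw [eS_eq_cmk, ← map_mul, ← map_mul]
  congr 1
  ext ε
  by_cases h : ε ∈ S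
  · by_cases hv : (v : Eps → K) ε = 0
    · have hu : (u : Eps → K) ε = 0 := norm_le_zero_iff.1 (by simpa [hv] using hS ε h)
      simp [indicatorNet, q, h, hu, hv]
    · simp [indicatorNet, q, h, mul_div_cancel₀ _ hv]
  · simp [indicatorNet, q, h]

theorem exists_dvd_mul_eS (x y : CGen K) :
    ∃ S : Set Eps, y ∣ x * eS K S ∧ x ∣ y * eS K Sᶜ := by
  obtain ⟨u, rfl⟩ := Ideal.Quotient.mk_surjective x
  obtain ⟨v, rfl⟩ := Ideal.Quotient.mk_surjective y
  exact ⟨{ε | ‖(u : Eps → K) ε‖ ≤ ‖(v : Eps → K) ε‖}, dvd_cmk_mul_eS K u v _ fun _ h => h,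
    dvd_cmk_mul_eS K v u _ fun _ h => le_of_not_ge h⟩

theorem mem_or_mem_of_eS_mem_or_compl_mem {I J L : Ideal (CGen K)}
    (hsplit : ∀ S : Set Eps, eS K S ∈ I ∨ eS K Sᶜ ∈ I) (hJ : J.IsRadical)
    (hJL : J ≤ L) (hIL : I ≤ L) {x y : CGen K} (hxy : x * y ∈ J) : x ∈ L ∨ y ∈ L := by
  obtain ⟨S, hyx, hxy'⟩ := exists_dvd_mul_eS K x y
  have hx : x * eS K S ∈ L := hJL (hJ.mul_mem_of_dvd hyx hxy)
  have hy : y * eS K Sᶜ ∈ L := hJL (hJ.mul_mem_of_dvd hxy' (by rwa [mul_comm]))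
  rcases hsplit S with hS | hS
  · exact Or.inr (L.mem_of_mul_mem_of_mul_mem (eS_add_compl K S) (L.mul_mem_left y (hIL hS)) hy)
  · exact Or.inl (L.mem_of_mul_mem_of_mul_mem (eS_add_compl K S) hx (L.mul_mem_left x (hIL hS)))

theorem le_total_of_eS_mem_or_compl_mem {I J J' : Ideal (CGen K)}
    (hsplit : ∀ S : Set Eps, eS K S ∈ I ∨ eS K Sᶜ ∈ I) (hJ : I ≤ J) (hJ' : I ≤ J') :
    J ≤ J' ∨ J' ≤ J := by
  refine or_iff_not_imp_left.2 fun hJJ' y hy => ?_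
  obtain ⟨x, hxJ, hxJ'⟩ := SetLike.not_le_iff_exists.1 hJJ'
  obtain ⟨S, hyx, hxy⟩ := exists_dvd_mul_eS K x y
  have hS : eS K S ∈ I := (hsplit S).resolve_right fun hSc => hxJ' <|
    J'.mem_of_mul_mem_of_mul_mem (eS_add_compl K S) (J'.mem_of_dvd hyx hy)
      (J'.mul_mem_left x (hJ' hSc))
  exact J.mem_of_mul_mem_of_mul_mem (eS_add_compl K S) (J.mul_mem_left y (hJ hS))
    (J.mem_of_dvd hxy hxJ)

/-- for a proper ideal `I` of `𝕂̃`, TFAE: `I` is pseudoprime; the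
ideals containing `I` are totally ordered by inclusion; `I` is irreducible;
for every `S ⊆ (0,1)`, `e_S ∈ I` or `e_{∁S} ∈ I`; the radical of `I` is prime. -/
theorem stmt4 (I : Ideal (CGen K)) (hI : I ≠ ⊤) :
    List.TFAE [∀ a b : CGen K, a * b = 0 → a ∈ I ∨ b ∈ I,
      ∀ J J' : Ideal (CGen K), I ≤ J → I ≤ J' → J ≤ J' ∨ J' ≤ J,
      ∀ J J' : Ideal (CGen K), I = J ⊓ J' → I = J ∨ I = J',
      ∀ S : Set Eps, eS K S ∈ I ∨ eS K Sᶜ ∈ I,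
      I.radical.IsPrime] := by
  have eS_mem_of_eq_sup {S : Set Eps} (h : I = Ideal.span {eS K S} ⊔ I) : eS K S ∈ I :=
    h ▸ Ideal.mem_sup_left (Ideal.mem_span_singleton_self _)
  tfae_have 1 → 4 := fun h S => h _ _ (eS_mul_compl K S)
  tfae_have 4 → 1 := fun h a b hab =>
    mem_or_mem_of_eS_mem_or_compl_mem K h Ideal.isRadical_bot bot_le le_rfl (Ideal.mem_bot.2 hab)
  tfae_have 4 → 2 := fun h _ _ => le_total_of_eS_mem_or_compl_mem K h
  tfae_have 2 → 3 := fun h J J' hJJ' =>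
    (h J J' (hJJ' ▸ inf_le_left) (hJJ' ▸ inf_le_right)).imp
      (fun hle => hJJ'.trans (inf_eq_left.2 hle)) (fun hle => hJJ'.trans (inf_eq_right.2 hle))
  tfae_have 3 → 4 := fun h S =>
    (h _ _ (Ideal.span_singleton_sup_inf_span_singleton_sup (eS_add_compl K S)
      (eS_mul_compl K S)).symm).imp eS_mem_of_eq_sup eS_mem_of_eq_sup
  tfae_have 4 → 5 := fun h =>
    ⟨mt Ideal.radical_eq_top.1 hI, fun hxy =>
      mem_or_mem_of_eS_mem_or_compl_mem K h I.radical_isRadical le_rfl I.le_radical hxy⟩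
  tfae_have 5 → 4 := fun h S =>
    (h.mem_or_mem (eS_mul_compl K S ▸ I.radical.zero_mem)).imp
      (isIdempotentElem_eS K S).mem_of_mem_radical (isIdempotentElem_eS K Sᶜ).mem_of_mem_radical
  tfae_finish

end
end

section
/- If I is a proper pseudoprime ideal of 𝕂̃, then the annihilator of I is the zero ideal, Ann(I) = {0}; consequently, I is not countably generated as an ideal. -/
noncomputable section

set_option maxHeartbeats 1000000
set_option synthInstance.maxHeartbeats 400000

open scoped Classical

variable (K : Type) [RCLike K]

/-! If `x ≠ 0`, then `|x_ε| > ε^a` along a sequence `ε_k ↓ 0`. Splitting that sequence into its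
even and odd terms gives disjoint sets `T₀`, `T₁` with `e_{T₀} e_{T₁} = 0`, so one of them, say
`e_T`, lies in `I`; but `x e_T ≠ 0`, so `x ∉ Ann(I)`.

If `I` were generated by `g₀, g₁, …`, then for every `n` there are arbitrarily small `ε` with
`|g_i(ε)| < ε^n` for all `i < n`: otherwise `∑_{i<n} |g_i|²` is invertible and lies in `I`. A
decreasing sequence of such `ε_n` gives a set `T` with `e_T ≠ 0` and `e_T g_i = 0` for all `i`,
i.e. a nonzero element of `Ann(I)`. -/

open Filter Set

theorem exists_strictAnti_tendsto_atBot_forall_of_frequently {α : Type*} [LinearOrder α]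
    [NoMinOrder α] {u : ℕ → α} (hu : Tendsto u atTop atBot) {P : ℕ → α → Prop}
    (h : ∀ n, ∃ᶠ x in atBot, P n x) :
    ∃ f : ℕ → α, StrictAnti f ∧ Tendsto f atTop atBot ∧ ∀ n, P n (f n) := by
  have : Nonempty α := ⟨u 0⟩
  choose F hF_lt hF_P using fun n => frequently_atBot'.1 (h n)
  let f : ℕ → α := fun n => Nat.rec (F 0 (u 0)) (fun k x => F (k + 1) (min x (u (k + 1)))) n
  have hf_lt_u : ∀ n, f n < u n
    | 0 => hF_lt 0 _
    | k + 1 => (hF_lt (k + 1) _).trans_le (min_le_right _ _)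
  refine ⟨f, strictAnti_nat_of_succ_lt fun k => (hF_lt (k + 1) _).trans_le (min_le_left _ _),
    tendsto_atBot_mono (fun n => (hf_lt_u n).le) hu, ?_⟩
  rintro (_ | k)
  exacts [hF_P 0 _, hF_P (k + 1) _]

instance : Nonempty Eps := ⟨⟨1 / 2, by norm_num⟩⟩

theorem exists_tendsto_atBot_eps : ∃ u : ℕ → Eps, Tendsto u atTop atBot := by
  have hmem : ∀ n : ℕ, 1 / ((n : ℝ) + 2) ∈ Ioo (0 : ℝ) 1 := fun n =>
    ⟨by positivity, by rw [div_lt_one (by positivity)]; linarith [n.cast_nonneg (α := ℝ)]⟩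
  refine ⟨fun n => ⟨_, hmem n⟩, tendsto_atBot.2 fun b => ?_⟩
  obtain ⟨N, hN⟩ := exists_nat_one_div_lt b.2.1
  filter_upwards [eventually_ge_atTop N] with n hn
  change 1 / ((n : ℝ) + 2) ≤ b
  calc 1 / ((n : ℝ) + 2) ≤ 1 / ((N : ℝ) + 1) := by
        gcongr
        linarith [(Nat.cast_le (α := ℝ)).2 hn]
    _ ≤ b := hN.le

section

variable {K}

theorem isNegligible_iff_eventually (x : Eps → K) :
    IsNegligible K x ↔ ∀ a : ℝ, ∀ᶠ ε : Eps in atBot, ‖x ε‖ ≤ (ε : ℝ) ^ a := by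
  simp only [IsNegligible, eventually_atBot, Subtype.exists, Subtype.forall, Subtype.mk_le_mk,
    exists_prop]

theorem isModerate_iff_eventually (x : Eps → K) :
    IsModerate K x ↔ ∃ a : ℝ, ∀ᶠ ε : Eps in atBot, ‖x ε‖ ≤ (ε : ℝ) ^ a := by
  simp only [IsModerate, eventually_atBot, Subtype.exists, Subtype.forall, Subtype.mk_le_mk,
    exists_prop]

theorem isUnit_cmk_of_eventually_rpow_le {u : Moderate K} {b : ℝ}
    (h : ∀ᶠ ε : Eps in atBot, (ε : ℝ) ^ b ≤ ‖(u : Eps → K) ε‖) : IsUnit (cmk K u) := by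
  have hu : ∀ᶠ ε : Eps in atBot, (u : Eps → K) ε ≠ 0 := h.mono fun ε hε =>
    norm_pos_iff.1 ((Real.rpow_pos_of_pos ε.2.1 b).trans_le hε)
  have hv : IsModerate K fun ε => ((u : Eps → K) ε)⁻¹ := by
    refine (isModerate_iff_eventually _).2 ⟨-b, h.mono fun ε hε => ?_⟩
    rw [norm_inv, Real.rpow_neg ε.2.1.le]
    exact inv_anti₀ (Real.rpow_pos_of_pos ε.2.1 b) hε
  refine IsUnit.of_mul_eq_one (cmk K ⟨_, hv⟩) ?_
  rw [← map_mul, ← map_one (cmk K), Ideal.Quotient.eq]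
  refine (isNegligible_iff_eventually _).2 fun a => hu.mono fun ε hε => ?_
  change ‖(u : Eps → K) ε * ((u : Eps → K) ε)⁻¹ - 1‖ ≤ _
  rw [mul_inv_cancel₀ hε, sub_self, norm_zero]
  exact (Real.rpow_pos_of_pos ε.2.1 a).le

theorem isModerate_conj (u : Moderate K) :
    IsModerate K fun ε => starRingEnd K ((u : Eps → K) ε) := by
  obtain ⟨a, ε₀, h₀, h⟩ := u.2
  exact ⟨a, ε₀, h₀, fun ε hε => (RCLike.norm_conj _).trans_le (h ε hε)⟩

theorem eq_top_of_eventually_exists_rpow_le {I : Ideal (CGen K)} {r : ℕ → Moderate K}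
    (hr : ∀ i, cmk K (r i) ∈ I) {n : ℕ} {b : ℝ}
    (h : ∀ᶠ ε : Eps in atBot, ∃ i < n, (ε : ℝ) ^ b ≤ ‖(r i : Eps → K) ε‖) : I = ⊤ := by
  let s : Moderate K := ∑ i ∈ Finset.range n, ⟨_, isModerate_conj (r i)⟩ * r i
  have hs : cmk K s ∈ I := by
    simp only [s, map_sum, map_mul]
    exact Ideal.sum_mem _ fun i _ => I.mul_mem_left _ (hr i)
  have hs_norm : ∀ ε, ‖(s : Eps → K) ε‖ = ∑ i ∈ Finset.range n, ‖(r i : Eps → K) ε‖ ^ 2 := by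
    intro ε
    simp only [s, AddSubmonoidClass.coe_finsetSum, Subring.coe_mul, Finset.sum_apply,
      Pi.mul_apply, RCLike.conj_mul]
    norm_cast
    exact abs_of_nonneg (Finset.sum_nonneg fun i _ => sq_nonneg _)
  refine I.eq_top_of_isUnit_mem hs (isUnit_cmk_of_eventually_rpow_le (b := 2 * b) ?_)
  filter_upwards [h] with ε ⟨i, hi, hle⟩
  rw [hs_norm, mul_comm, Real.rpow_mul ε.2.1.le, Real.rpow_two]
  calc ((ε : ℝ) ^ b) ^ 2 ≤ ‖(r i : Eps → K) ε‖ ^ 2 := by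
        gcongr
        exact (Real.rpow_pos_of_pos ε.2.1 b).le
    _ ≤ _ := Finset.single_le_sum (fun j _ => sq_nonneg ‖(r j : Eps → K) ε‖)
        (Finset.mem_range.2 hi)

theorem cmk_mul_eS_eq_zero_iff (u : Moderate K) (T : Set Eps) :
    cmk K u * eS K T = 0 ↔
      ∀ a : ℝ, ∀ᶠ ε : Eps in atBot, ε ∈ T → ‖(u : Eps → K) ε‖ ≤ (ε : ℝ) ^ a := by
  rw [eS, ← map_mul, Ideal.Quotient.eq_zero_iff_mem]
  refine (isNegligible_iff_eventually _).trans <| forall_congr' fun a =>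
    eventually_congr <| Eventually.of_forall fun ε => ?_
  change ‖(u : Eps → K) ε * (if ε ∈ T then 1 else 0)‖ ≤ _ ↔ _
  by_cases hε : ε ∈ T
  · simp [hε]
  · simp [hε, (Real.rpow_pos_of_pos ε.2.1 a).le]

theorem cmk_mul_eS_ne_zero {u : Moderate K} {T : Set Eps} {a : ℝ}
    (hT : ∃ᶠ ε : Eps in atBot, ε ∈ T) (hu : ∀ ε ∈ T, (ε : ℝ) ^ a < ‖(u : Eps → K) ε‖) :
    cmk K u * eS K T ≠ 0 := by
  intro h
  obtain ⟨ε, hεT, hε⟩ := (hT.and_eventually ((cmk_mul_eS_eq_zero_iff u T).1 h a)).exists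
  exact (hu ε hεT).not_ge (hε hεT)

theorem eS_ne_zero {T : Set Eps} (hT : ∃ᶠ ε : Eps in atBot, ε ∈ T) : eS K T ≠ 0 := by
  have h1 : ∀ ε ∈ T, (ε : ℝ) ^ (1 : ℝ) < ‖((1 : Moderate K) : Eps → K) ε‖ := fun ε _ => by
    simpa using ε.2.2
  simpa using cmk_mul_eS_ne_zero hT h1

theorem eS_mul_eS_of_disjoint {S T : Set Eps} (h : Disjoint S T) : eS K S * eS K T = 0 :=
  (cmk_mul_eS_eq_zero_iff _ T).2 fun a => Eventually.of_forall fun ε hεT => by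
    change ‖if ε ∈ S then (1 : K) else 0‖ ≤ _
    simp [h.notMem_of_mem_right hεT, (Real.rpow_pos_of_pos ε.2.1 a).le]

theorem eq_zero_of_forall_mul_eq_zero_of_pseudoprime {I : Ideal (CGen K)}
    (hp : ∀ a b : CGen K, a * b = 0 → a ∈ I ∨ b ∈ I) {x : CGen K} (hx : ∀ a ∈ I, x * a = 0) :
    x = 0 := by
  obtain ⟨u, rfl⟩ := Ideal.Quotient.mk_surjective x
  by_contra hx0
  obtain ⟨a, ha⟩ : ∃ a : ℝ, ∃ᶠ ε : Eps in atBot, (ε : ℝ) ^ a < ‖(u : Eps → K) ε‖ := by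
    have : ¬ IsNegligible K u := fun h => hx0 (Ideal.Quotient.eq_zero_iff_mem.2 h)
    simpa only [isNegligible_iff_eventually, not_forall, not_eventually, not_le] using this
  obtain ⟨v, hv⟩ := exists_tendsto_atBot_eps
  obtain ⟨f, hf_anti, hf_tendsto, hf⟩ :=
    exists_strictAnti_tendsto_atBot_forall_of_frequently hv fun _ => ha
  have hne : ∀ φ : ℕ → ℕ, StrictMono φ → cmk K u * eS K (range (f ∘ φ)) ≠ 0 := by
    intro φ hφ
    refine cmk_mul_eS_ne_zero ?_ (by rintro _ ⟨k, rfl⟩; exact hf _)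
    exact (hf_tendsto.comp hφ.tendsto_atTop).frequently (Frequently.of_forall mem_range_self)
  have hdisj : Disjoint (range (f ∘ (2 * ·))) (range (f ∘ (2 * · + 1))) :=
    Set.disjoint_range_iff.2 fun i j h => by
      simp only [Function.comp_apply] at h
      have := hf_anti.injective h
      omega
  rcases hp _ _ (eS_mul_eS_of_disjoint hdisj) with h | h
  · exact hne _ (strictMono_nat_of_lt_succ fun k => by omega) (hx _ h)
  · exact hne _ (strictMono_nat_of_lt_succ fun k => by omega) (hx _ h)

theorem exists_eS_ne_zero_forall_mul_eq_zero {I : Ideal (CGen K)} (hI : I ≠ ⊤)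
    {g : ℕ → CGen K} (hg : ∀ i, g i ∈ I) : ∃ T : Set Eps, eS K T ≠ 0 ∧ ∀ i, g i * eS K T = 0 := by
  choose r hr using fun i => Ideal.Quotient.mk_surjective (g i)
  obtain rfl : g = fun i => cmk K (r i) := funext fun i => (hr i).symm
  have hsmall : ∀ n : ℕ,
      ∃ᶠ ε : Eps in atBot, ∀ i < n, ‖(r i : Eps → K) ε‖ < (ε : ℝ) ^ (n : ℝ) := by
    intro n
    by_contra h
    refine hI (eq_top_of_eventually_exists_rpow_le hg (n := n) (b := n) ?_)
    filter_upwards [not_frequently.1 h] with ε hε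
    push Not at hε
    exact hε
  obtain ⟨v, hv⟩ := exists_tendsto_atBot_eps
  obtain ⟨f, hf_anti, hf_tendsto, hf⟩ :=
    exists_strictAnti_tendsto_atBot_forall_of_frequently hv hsmall
  refine ⟨range f, eS_ne_zero (hf_tendsto.frequently (Frequently.of_forall mem_range_self)),
    fun i => (cmk_mul_eS_eq_zero_iff _ _).2 fun a => ?_⟩
  obtain ⟨N, hN⟩ := exists_nat_ge a
  filter_upwards [eventually_le_atBot (f (max N (i + 1)))]
  rintro _ hle ⟨k, rfl⟩
  have hk : max N (i + 1) ≤ k := hf_anti.le_iff_ge.1 hle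
  calc ‖(r i : Eps → K) (f k)‖ ≤ (f k : ℝ) ^ (k : ℝ) := (hf k i (by omega)).le
    _ ≤ (f k : ℝ) ^ a := Real.rpow_le_rpow_of_exponent_ge (f k).2.1 (f k).2.2.le
        (hN.trans (Nat.cast_le.2 ((le_max_left _ _).trans hk)))

end

/-- a proper pseudoprime ideal `I` of `𝕂̃` has zero annihilator, and
is not countably generated. -/
theorem stmt16 (I : Ideal (CGen K)) (hI : I ≠ ⊤)
    (hp : ∀ a b : CGen K, a * b = 0 → a ∈ I ∨ b ∈ I) :
    (∀ x : CGen K, (∀ a ∈ I, x * a = 0) → x = 0) ∧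
    ¬ ∃ S : Set (CGen K), S.Countable ∧ I = Ideal.span S := by
  have hann : ∀ x : CGen K, (∀ a ∈ I, x * a = 0) → x = 0 := fun _ =>
    eq_zero_of_forall_mul_eq_zero_of_pseudoprime hp
  refine ⟨hann, ?_⟩
  rintro ⟨S, hS, rfl⟩
  obtain ⟨g, hg⟩ := (hS.insert 0).exists_eq_range (insert_nonempty 0 S)
  have hg_mem : ∀ i, g i ∈ Ideal.span S := fun i => by
    rcases (hg ▸ mem_range_self i : g i ∈ insert 0 S) with h | h
    exacts [h ▸ Submodule.zero_mem _, Ideal.subset_span h]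
  obtain ⟨T, hT, hTg⟩ := exists_eS_ne_zero_forall_mul_eq_zero hI hg_mem
  have hspan : Ideal.span S ≤ annIdeal K (eS K T) := by
    refine Ideal.span_le.2 fun s hs => ?_
    obtain ⟨i, rfl⟩ : s ∈ range g := hg ▸ mem_insert_of_mem 0 hs
    exact hTg i
  exact hT (hann _ fun a ha => (mul_comm _ _).trans (hspan ha))
end
end
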